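/- There exist graphs G1, G2 and an integer k ≥ 2 such that α_k(G1 □ G2) > α_k(G1 × G2); specifically, with k = 2, G1 = P_3 (path on 3 vertices), and G2 = K_{1,3} (star with 3 leaves), one has α_2(P_3 □ K_{1,3}) > α_2(P_3 × K_{1,3}). -/

import Mathlib

open SimpleGraph

/-- The `k`-independence number: the maximum size of a set of vertices at pairwise
distance greater than `k`. -/
noncomputable def kIndepNum {V : Type*} [Fintype V] (G : SimpleGraph V) (k : ℕ) : ℕ :=
  sSup {n | ∃ s : Finset V, s.card = n ∧ ∀ u ∈ s, ∀ v ∈ s, u ≠ v → (k : ℕ∞) < G.edist u v}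

/-- The tensor (direct / categorical) product of two simple graphs. -/
def tensorProd {V1 V2 : Type*} (G1 : SimpleGraph V1) (G2 : SimpleGraph V2) :
    SimpleGraph (V1 × V2) where
  Adj a b := G1.Adj a.1 b.1 ∧ G2.Adj a.2 b.2
  symm := by constructor; intro a b ⟨h1, h2⟩; exact ⟨G1.adj_symm h1, G2.adj_symm h2⟩
  loopless := by constructor; intro a ⟨h1, _⟩; exact G1.irrefl h1

/-!
In `P₃ □ K₁,₃` the vertices `(i, ℓᵢ)`, `ℓᵢ` the `i`-th leaf, are pairwise at distance
`d(i, j) + d(ℓᵢ, ℓⱼ) ≥ 1 + 2`, so `α₂ ≥ 3`. The tensor product `P₃ × K₁,₃` splits into the two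
components `{(0, c), (2, c), (1, ℓ)}` and `{(1, c), (0, ℓ), (2, ℓ)}` (`c` the centre), each of
diameter at most `2`, so a `2`-independent set meets each component at most once and `α₂ ≤ 2`.
-/

def IsDistIndep {V : Type*} (G : SimpleGraph V) (k : ℕ) (s : Finset V) : Prop :=
  ∀ u ∈ s, ∀ v ∈ s, u ≠ v → (k : ℕ∞) < G.edist u v

section kIndepNum

variable {V : Type*} [Fintype V] {G : SimpleGraph V} {k : ℕ}

theorem IsDistIndep.card_le_kIndepNum {s : Finset V} (hs : IsDistIndep G k s) :
    s.card ≤ kIndepNum G k :=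
  le_csSup ⟨Fintype.card V, fun _ ⟨t, ht, _⟩ => ht ▸ t.card_le_univ⟩ ⟨s, rfl, hs⟩

theorem kIndepNum_le_card_of_edist_le {ι : Type*} [Fintype ι] (f : V → ι)
    (hf : ∀ u v, f u = f v → G.edist u v ≤ k) : kIndepNum G k ≤ Fintype.card ι := by
  refine csSup_le ⟨0, ∅, rfl, by simp⟩ ?_
  rintro _ ⟨s, rfl, hs⟩
  refine Finset.card_le_card_of_injOn f (fun _ _ => Finset.mem_univ _) fun u hu v hv huv => ?_
  by_contra hne
  exact (hf u v huv).not_gt (hs u hu v hv hne)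

end kIndepNum

namespace SimpleGraph

variable {V : Type*} {G : SimpleGraph V} {u v : V}

theorem edist_le_two_iff :
    G.edist u v ≤ 2 ↔ u = v ∨ G.Adj u v ∨ ∃ w, G.Adj u w ∧ G.Adj w v := by
  rw [← not_lt, two_lt_edist_iff, Set.eq_empty_iff_forall_notMem]
  simp only [mem_commonNeighbors, not_and, not_forall, not_not, exists_prop]
  tauto

theorem edist_completeBipartiteGraph_inr {α β : Type*} [Nonempty α] {i j : β} (hij : i ≠ j) :
    (completeBipartiteGraph α β).edist (.inr i) (.inr j) = 2 := by
  obtain ⟨a⟩ := ‹Nonempty α›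
  refine edist_eq_two_iff.mpr ⟨by simpa using hij, by simp, .inl a, ?_⟩
  simp [mem_commonNeighbors]

theorem card_le_kIndepNum_boxProd_completeBipartiteGraph {α β : Type*} [Fintype V]
    [Fintype α] [Fintype β] [Nonempty α] (e : V ↪ β) :
    Fintype.card V ≤ kIndepNum (G □ completeBipartiteGraph α β) 2 := by
  let diag : V ↪ V × (α ⊕ β) :=
    ⟨fun v => (v, .inr (e v)), fun _ _ h => (Prod.ext_iff.mp h).1⟩
  have hdiag : IsDistIndep (G □ completeBipartiteGraph α β) 2 (Finset.univ.map diag) := by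
    simp only [IsDistIndep, Finset.mem_map, Finset.mem_univ, true_and]
    rintro _ ⟨u, rfl⟩ _ ⟨v, rfl⟩ huv
    have hne : u ≠ v := fun h => huv (h ▸ rfl)
    calc ((2 : ℕ) : ℕ∞) < 1 + 2 := by norm_num
      _ ≤ G.edist u v + 2 := by gcongr; exact Order.one_le_iff_pos.mpr (edist_pos_of_ne hne)
      _ = G.edist u v + (completeBipartiteGraph α β).edist (.inr (e u)) (.inr (e v)) := by
        rw [edist_completeBipartiteGraph_inr (e.injective.ne hne)]
      _ = _ := (edist_boxProd (diag u) (diag v)).symm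
  simpa using hdiag.card_le_kIndepNum

instance (n : ℕ) : DecidableRel (pathGraph n).Adj :=
  fun _ _ => decidable_of_iff' _ pathGraph_adj

instance {α β : Type*} : DecidableRel (completeBipartiteGraph α β).Adj :=
  fun _ _ => inferInstanceAs (Decidable (_ ∨ _))

end SimpleGraph

instance {V₁ V₂ : Type*} {G₁ : SimpleGraph V₁} {G₂ : SimpleGraph V₂} [DecidableRel G₁.Adj]
    [DecidableRel G₂.Adj] : DecidableRel (tensorProd G₁ G₂).Adj :=
  fun _ _ => inferInstanceAs (Decidable (_ ∧ _))

/-- Separates the two connected components of `P₃ × K₁,₃`. -/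
def pathTensorStarComponent (x : Fin 3 × (Fin 1 ⊕ Fin 3)) : Bool :=
  (x.1.val % 2 == 0) == x.2.isLeft

theorem edist_le_two_of_pathTensorStarComponent_eq (x y : Fin 3 × (Fin 1 ⊕ Fin 3))
    (h : pathTensorStarComponent x = pathTensorStarComponent y) :
    (tensorProd (pathGraph 3) (completeBipartiteGraph (Fin 1) (Fin 3))).edist x y ≤ 2 := by
  rw [edist_le_two_iff]
  revert x y
  decide

theorem kIndepNum_box_gt_tensor_example :
    kIndepNum (tensorProd (pathGraph 3) (completeBipartiteGraph (Fin 1) (Fin 3))) 2 <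
      kIndepNum (pathGraph 3 □ completeBipartiteGraph (Fin 1) (Fin 3)) 2 := by
  have tensor_le : kIndepNum (tensorProd (pathGraph 3)
      (completeBipartiteGraph (Fin 1) (Fin 3))) 2 ≤ 2 :=
    kIndepNum_le_card_of_edist_le _ edist_le_two_of_pathTensorStarComponent_eq
  have box_ge : 3 ≤ kIndepNum (pathGraph 3 □ completeBipartiteGraph (Fin 1) (Fin 3)) 2 :=
    card_le_kIndepNum_boxProd_completeBipartiteGraph (Function.Embedding.refl (Fin 3))
  omega
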